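/- Let S be a good set with A₁ ∈ S and B₁ ∈ S. Fix an enumeration of the elements of S as the rows of a 2k × 2k real matrix M_A, and let M_C be the matrix obtained from M_A by replacing the row equal to A₁ with C₁ (all other rows unchanged). Then det(M_A) = −det(M_C); equivalently, the matrix obtained by replacing the row A₁ with A₁ + C₁ has determinant zero. -/

import Mathlib

noncomputable section

/-- The ambient space `ℝ^{2k}`, written as pairs `(x, y)` with `x, y ∈ ℝ^k`. -/
abbrev V (k : ℕ) := (Fin k ⊕ Fin k) → ℝ

/-- `A_j = (e_j, 0)`. -/
def vA (k : ℕ) (j : Fin k) : V k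
  | .inl i => if i = j then 1 else 0
  | .inr _ => 0

/-- `B_j = (1/(2n)) · (2·𝟙 − e_j, 2·𝟙 − e_j)` with `n = 2k − 1`. -/
def vB (k : ℕ) (j : Fin k) : V k
  | .inl i => (2 - if i = j then 1 else 0) / (2 * (2 * (k : ℝ) - 1))
  | .inr i => (2 - if i = j then 1 else 0) / (2 * (2 * (k : ℝ) - 1))

/-- `C_j = (0, e_j)`. -/
def vC (k : ℕ) (j : Fin k) : V k
  | .inl _ => 0
  | .inr i => if i = j then 1 else 0

def setA (k : ℕ) : Set (V k) := Set.range (vA k)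
def setB (k : ℕ) : Set (V k) := Set.range (vB k)
def setC (k : ℕ) : Set (V k) := Set.range (vC k)
def setX (k : ℕ) : Set (V k) := setA k ∪ setB k ∪ setC k

/-- A subset `S ⊆ X` is good if it has exactly `2k` elements, contains no full
triple `{A_j, B_j, C_j}`, and `S ≠ A ∪ C`. -/
def IsGood (k : ℕ) (S : Set (V k)) : Prop :=
  S ⊆ setX k ∧ S.ncard = 2 * k ∧
  (∀ j : Fin k, ¬ (({vA k j, vB k j, vC k j} : Set (V k)) ⊆ S)) ∧
  S ≠ setA k ∪ setC k

def Delta0 (k : ℕ) : Set (V k) := convexHull ℝ (setA k ∪ setC k)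
def Delta1 (k : ℕ) : Set (V k) := convexHull ℝ (setA k ∪ setB k)
def Delta2 (k : ℕ) : Set (V k) := convexHull ℝ (setB k ∪ setC k)

/-- The modular block `Ω = closure(Δ₀ \ (Δ₁ ∪ Δ₂))`. -/
def OmegaB (k : ℕ) : Set (V k) := closure (Delta0 k \ (Delta1 k ∪ Delta2 k))

/-!
Replacing the row `A₁` by `A₁ + C₁` produces a matrix whose columns `x₁` and `y₁` coincide:
every `B_j` is symmetric under swapping the `x`- and `y`-blocks, the vectors `A_j`, `C_j` with
`j ≠ 1` vanish in both coordinates, and `C₁ ∉ S` because `S` contains no full triple. So that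
matrix is singular, and multilinearity of the determinant in the row `A₁` gives the rest.
-/

namespace Matrix

variable {n R : Type*} [Fintype n] [DecidableEq n] [CommRing R]

theorem det_updateRow_add_eq_zero_of_col_eq (M : Matrix n n R) (i₀ : n) (w : n → R)
    {c₁ c₂ : n} (hc : c₁ ≠ c₂) (hrow : ∀ i ≠ i₀, M i c₁ = M i c₂)
    (hw : (M i₀ + w) c₁ = (M i₀ + w) c₂) :
    (M.updateRow i₀ (M i₀ + w)).det = 0 := by
  refine det_zero_of_column_eq hc fun i => ?_
  by_cases hi : i = i₀
  · subst hi
    simpa only [updateRow_self] using hw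
  · simpa only [updateRow_ne hi] using hrow i hi

theorem det_eq_neg_det_updateRow_of_col_eq (M : Matrix n n R) (i₀ : n) (w : n → R)
    {c₁ c₂ : n} (hc : c₁ ≠ c₂) (hrow : ∀ i ≠ i₀, M i c₁ = M i c₂)
    (hw : (M i₀ + w) c₁ = (M i₀ + w) c₂) :
    M.det = -(M.updateRow i₀ w).det := by
  have h := det_updateRow_add_eq_zero_of_col_eq M i₀ w hc hrow hw
  rw [det_updateRow_add, updateRow_eq_self] at h
  exact eq_neg_of_add_eq_zero_left h

end Matrix

section Coordinates

variable {k : ℕ}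

theorem vA_apply_inl_eq_inr {j i : Fin k} (h : j ≠ i) : vA k j (.inl i) = vA k j (.inr i) := by
  simp [vA, Ne.symm h]

theorem vB_apply_inl_eq_inr (j i : Fin k) : vB k j (.inl i) = vB k j (.inr i) := rfl

theorem vC_apply_inl_eq_inr {j i : Fin k} (h : j ≠ i) : vC k j (.inl i) = vC k j (.inr i) := by
  simp [vC, Ne.symm h]

theorem vA_add_vC_apply_inl_eq_inr (j : Fin k) :
    (vA k j + vC k j) (.inl j) = (vA k j + vC k j) (.inr j) := by
  simp [vA, vC]

end Coordinates

namespace IsGood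

variable {k : ℕ} {S : Set (V k)} {j : Fin k}

theorem vC_notMem (hS : IsGood k S) (hA : vA k j ∈ S) (hB : vB k j ∈ S) : vC k j ∉ S :=
  fun hC => hS.2.2.1 j (by simp [Set.insert_subset_iff, hA, hB, hC])

theorem apply_inl_eq_inr (hS : IsGood k S) (hA : vA k j ∈ S) (hB : vB k j ∈ S)
    {v : V k} (hv : v ∈ S) (hvA : v ≠ vA k j) : v (.inl j) = v (.inr j) := by
  obtain (⟨j', rfl⟩ | ⟨j', rfl⟩) | ⟨j', rfl⟩ := hS.1 hv
  · exact vA_apply_inl_eq_inr fun h => hvA (h ▸ rfl)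
  · exact vB_apply_inl_eq_inr j' j
  · exact vC_apply_inl_eq_inr fun h => hS.vC_notMem hA hB (h ▸ hv)

end IsGood

/-- Let `S` be good with `A₁, B₁ ∈ S`.  Enumerate the elements of `S` as the rows of a
`2k × 2k` matrix `M_A`; let `M_C` be obtained by replacing the row equal to `A₁` with
`C₁`.  Then `det(M_A) = −det(M_C)`; equivalently, replacing the row `A₁` by `A₁ + C₁`
yields a matrix of determinant zero. -/
theorem stmt_8 (k : ℕ) (hk : 2 ≤ k) (S : Set (V k)) (hS : IsGood k S)
    (hA1 : vA k ⟨0, by omega⟩ ∈ S) (hB1 : vB k ⟨0, by omega⟩ ∈ S)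
    (r : (Fin k ⊕ Fin k) → V k) (hr : Function.Injective r)
    (hrange : Set.range r = S)
    (i₀ : Fin k ⊕ Fin k) (hi₀ : r i₀ = vA k ⟨0, by omega⟩) :
    (Matrix.of fun i j => r i j).det =
      -(Matrix.of fun i j => Function.update r i₀ (vC k ⟨0, by omega⟩) i j).det ∧
    (Matrix.of fun i j =>
      Function.update r i₀ (vA k ⟨0, by omega⟩ + vC k ⟨0, by omega⟩) i j).det = 0 := by
  set z : Fin k := ⟨0, by omega⟩
  have hrow : ∀ i ≠ i₀, r i (.inl z) = r i (.inr z) := fun i hi =>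
    hS.apply_inl_eq_inr hA1 hB1 (hrange ▸ ⟨i, rfl⟩) (hi₀ ▸ hr.ne hi)
  have hw : (r i₀ + vC k z) (.inl z) = (r i₀ + vC k z) (.inr z) :=
    hi₀ ▸ vA_add_vC_apply_inl_eq_inr z
  have hc : (Sum.inl z : Fin k ⊕ Fin k) ≠ .inr z := Sum.inl_ne_inr
  refine ⟨(Matrix.of r).det_eq_neg_det_updateRow_of_col_eq i₀ (vC k z) hc hrow hw, ?_⟩
  rw [← hi₀]
  exact (Matrix.of r).det_updateRow_add_eq_zero_of_col_eq i₀ (vC k z) hc hrow hw
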